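/- Work in the nonstationary SGD framework with constant stepsize: let 0 < γ ≤ min{μ/L², 1/L} and θ_{t+1} = θ_t − γ m_{t+1}(θ_t) − γ ξ_{t+1}(θ_t) for all t ≥ 0. Then, pathwise (for every realization), for all t ≥ 0: ‖θ_{t+1} − θ⋆_{t+1}‖² ≤ (1 − γμ/2)^{t+1}‖θ₀ − θ⋆₀‖² + (2/(γμ)) ∑_{ℓ=0}^{t} (1 − γμ/2)^{t−ℓ} ‖Δ_ℓ‖² + γ² ∑_{ℓ=0}^{t} (1 − γμ/2)^{t−ℓ} ‖ξ_{ℓ+1}(θ_ℓ)‖² + ∑_{ℓ=0}^{t} (1 − γμ/2)^{t−ℓ} M_{ℓ+1}, where M_{ℓ+1} := −2γ⟨(θ_ℓ − θ⋆_{ℓ+1}) − γ m_{ℓ+1}(θ_ℓ), ξ_{ℓ+1}(θ_ℓ)⟩. -/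

import Mathlib

/-!
Strong monotonicity and Lipschitz continuity of `m_{t+1}`, together with `γ L² ≤ μ`, make the
noiseless step `θ ↦ θ - γ m_{t+1}(θ)` a contraction by `1 - γμ` in squared distance to `θ⋆_{t+1}`.
Measuring that distance from `θ⋆_t` instead costs the drift `Δ_t`; Young's inequality absorbs the
cross term at the price of halving the rate to `1 - γμ/2`, and the noise enters exactly through
the expansion of `‖v - γ ξ‖²`. The resulting one-step recursion is unrolled by the discrete
Grönwall inequality.
-/

open scoped InnerProductSpace

open Finset

theorem le_pow_mul_add_sum_of_le_mul_add {R : Type*} [CommSemiring R] [PartialOrder R]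
    [IsOrderedRing R] {u b : ℕ → R} {q : R} (hq : 0 ≤ q) (hu : ∀ n, u (n + 1) ≤ q * u n + b n)
    (t : ℕ) :
    u (t + 1) ≤ q ^ (t + 1) * u 0 + ∑ ℓ ∈ range (t + 1), q ^ (t - ℓ) * b ℓ := by
  have h := discrete_gronwall_prod_general (n₀ := 0) (fun n _ => hu n) (fun _ _ => hq)
    (Nat.zero_le (t + 1))
  simp only [prod_const, Nat.card_Ico, ← range_eq_Ico, card_range, Nat.add_sub_add_right] at h
  simpa only [mul_comm] using h

theorem one_sub_mul_norm_add_sq_le {E : Type*} [SeminormedAddCommGroup E] {u : ℝ} (hu0 : 0 < u)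
    (hu1 : u ≤ 1) (a b : E) :
    (1 - u) * ‖a + b‖ ^ 2 ≤ (1 - u / 2) * ‖a‖ ^ 2 + 2 / u * ‖b‖ ^ 2 := by
  have hyoung : 2 * (‖a‖ * ‖b‖) ≤ u / 2 * ‖a‖ ^ 2 + 2 / u * ‖b‖ ^ 2 := by
    have h : u / 2 * ‖a‖ ^ 2 + 2 / u * ‖b‖ ^ 2 - 2 * (‖a‖ * ‖b‖)
        = (u * ‖a‖ - 2 * ‖b‖) ^ 2 / (2 * u) := by field_simp; ring
    linarith [show 0 ≤ (u * ‖a‖ - 2 * ‖b‖) ^ 2 / (2 * u) by positivity]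
  have hK : (1 - u) * (2 / u) = 2 / u - 2 := by field_simp
  calc (1 - u) * ‖a + b‖ ^ 2 ≤ (1 - u) * (‖a‖ + ‖b‖) ^ 2 := by gcongr; exact norm_add_le a b
    _ = (1 - u) * (‖a‖ ^ 2 + ‖b‖ ^ 2) + (1 - u) * (2 * (‖a‖ * ‖b‖)) := by ring
    _ ≤ (1 - u) * (‖a‖ ^ 2 + ‖b‖ ^ 2) + (1 - u) * (u / 2 * ‖a‖ ^ 2 + 2 / u * ‖b‖ ^ 2) := by
        gcongr
    _ = (1 - u / 2) * ‖a‖ ^ 2 + 2 / u * ‖b‖ ^ 2 - (u ^ 2 / 2 * ‖a‖ ^ 2 + (1 + u) * ‖b‖ ^ 2) := by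
        linear_combination ‖b‖ ^ 2 * hK
    _ ≤ (1 - u / 2) * ‖a‖ ^ 2 + 2 / u * ‖b‖ ^ 2 := by
        have : 0 ≤ u ^ 2 / 2 * ‖a‖ ^ 2 + (1 + u) * ‖b‖ ^ 2 := by positivity
        linarith

section InnerProductSpace

variable {E : Type*} [NormedAddCommGroup E] [InnerProductSpace ℝ E]

theorem norm_sub_smul_sq (v n : E) (γ : ℝ) :
    ‖v - γ • n‖ ^ 2 = ‖v‖ ^ 2 + γ ^ 2 * ‖n‖ ^ 2 + -2 * γ * ⟪v, n⟫_ℝ := by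
  rw [norm_sub_sq_real, real_inner_smul_right, norm_smul, mul_pow, Real.norm_eq_abs, sq_abs]
  ring

theorem le_of_strongMonotone_of_lipschitz [Nontrivial E] {F : E → E} {μ L : ℝ}
    (hmono : ∀ x y, μ * ‖x - y‖ ^ 2 ≤ ⟪F x - F y, x - y⟫_ℝ)
    (hlip : ∀ x y, ‖F x - F y‖ ≤ L * ‖x - y‖) : μ ≤ L := by
  obtain ⟨x, hx⟩ := exists_ne (0 : E)
  have hmono₀ := hmono x 0
  have hlip₀ := hlip x 0
  rw [sub_zero] at hmono₀ hlip₀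
  have h : μ * ‖x‖ ^ 2 ≤ L * ‖x‖ ^ 2 := calc
    μ * ‖x‖ ^ 2 ≤ ⟪F x - F 0, x⟫_ℝ := hmono₀
    _ ≤ ‖F x - F 0‖ * ‖x‖ := real_inner_le_norm _ _
    _ ≤ L * ‖x‖ * ‖x‖ := by gcongr
    _ = L * ‖x‖ ^ 2 := by ring
  exact le_of_mul_le_mul_right h (by positivity)

theorem norm_sub_smul_sq_le_of_inner_of_norm_le {v g : E} {μ L γ : ℝ}
    (hmono : μ * ‖v‖ ^ 2 ≤ ⟪g, v⟫_ℝ) (hlip : ‖g‖ ≤ L * ‖v‖) (hγ0 : 0 ≤ γ)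
    (hγL : γ * L ^ 2 ≤ μ) :
    ‖v - γ • g‖ ^ 2 ≤ (1 - γ * μ) * ‖v‖ ^ 2 := by
  have hg : ‖g‖ ^ 2 ≤ L ^ 2 * ‖v‖ ^ 2 := by
    rw [← mul_pow]; gcongr
  have hγg : γ ^ 2 * ‖g‖ ^ 2 ≤ γ * μ * ‖v‖ ^ 2 := calc
    γ ^ 2 * ‖g‖ ^ 2 ≤ γ ^ 2 * (L ^ 2 * ‖v‖ ^ 2) := by gcongr
    _ = γ * (γ * L ^ 2) * ‖v‖ ^ 2 := by ring
    _ ≤ γ * μ * ‖v‖ ^ 2 := by gcongr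
  rw [norm_sub_smul_sq, real_inner_comm]
  linarith [mul_le_mul_of_nonneg_left hmono hγ0]

theorem norm_sgd_step_sub_sq_le {F : E → E} {x z z' n : E} {μ L γ : ℝ} (hμ : 0 < μ)
    (hz' : F z' = 0) (hmono : μ * ‖x - z'‖ ^ 2 ≤ ⟪F x - F z', x - z'⟫_ℝ)
    (hlip : ‖F x - F z'‖ ≤ L * ‖x - z'‖) (hγ0 : 0 < γ) (hγL : γ * L ^ 2 ≤ μ)
    (hγμ : γ * μ ≤ 1) :
    ‖x - γ • F x - γ • n - z'‖ ^ 2 ≤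
      (1 - γ * μ / 2) * ‖x - z‖ ^ 2 + 2 / (γ * μ) * ‖z - z'‖ ^ 2 + γ ^ 2 * ‖n‖ ^ 2
        + (-2 * γ) * ⟪x - z' - γ • F x, n⟫_ℝ := by
  rw [hz', sub_zero] at hmono hlip
  have hcontr := norm_sub_smul_sq_le_of_inner_of_norm_le hmono hlip hγ0.le hγL
  have hdrift := one_sub_mul_norm_add_sq_le (mul_pos hγ0 hμ) hγμ (x - z) (z - z')
  rw [sub_add_sub_cancel] at hdrift
  rw [show x - γ • F x - γ • n - z' = (x - z' - γ • F x) - γ • n by abel, norm_sub_smul_sq]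
  linarith

end InnerProductSpace

/-- Unrolled (pathwise) final-iterate tracking error bound for nonstationary SGD
with constant stepsize. -/
theorem sgd_unrolled_tracking_error
    (d : ℕ) (hd : 1 ≤ d) (μ L : ℝ) (hμ : 0 < μ) (hL : 0 < L)
    (m : ℕ → EuclideanSpace ℝ (Fin d) → EuclideanSpace ℝ (Fin d))
    (ξ : ℕ → EuclideanSpace ℝ (Fin d) → EuclideanSpace ℝ (Fin d))
    (θ θstar : ℕ → EuclideanSpace ℝ (Fin d))
    (hmono : ∀ t x y, μ * ‖x - y‖ ^ 2 ≤ ⟪m (t + 1) x - m (t + 1) y, x - y⟫_ℝ)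
    (hlip : ∀ t x y, ‖m (t + 1) x - m (t + 1) y‖ ≤ L * ‖x - y‖)
    (hzero : ∀ t, m (t + 1) (θstar (t + 1)) = 0)
    (γ : ℝ) (hγ0 : 0 < γ) (hγ : γ ≤ min (μ / L ^ 2) (1 / L))
    (hupd : ∀ t, θ (t + 1) = θ t - γ • m (t + 1) (θ t) - γ • ξ (t + 1) (θ t)) :
    ∀ t : ℕ,
      ‖θ (t + 1) - θstar (t + 1)‖ ^ 2 ≤
        (1 - γ * μ / 2) ^ (t + 1) * ‖θ 0 - θstar 0‖ ^ 2
        + 2 / (γ * μ) * ∑ ℓ ∈ Finset.range (t + 1),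
            (1 - γ * μ / 2) ^ (t - ℓ) * ‖θstar ℓ - θstar (ℓ + 1)‖ ^ 2
        + γ ^ 2 * ∑ ℓ ∈ Finset.range (t + 1),
            (1 - γ * μ / 2) ^ (t - ℓ) * ‖ξ (ℓ + 1) (θ ℓ)‖ ^ 2
        + ∑ ℓ ∈ Finset.range (t + 1),
            (1 - γ * μ / 2) ^ (t - ℓ)
              * ((-2 * γ) * ⟪θ ℓ - θstar (ℓ + 1) - γ • m (ℓ + 1) (θ ℓ), ξ (ℓ + 1) (θ ℓ)⟫_ℝ) := by
  have : NeZero d := ⟨by omega⟩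
  have hμL : μ ≤ L := le_of_strongMonotone_of_lipschitz (hmono 0) (hlip 0)
  obtain ⟨hγμL, hγL⟩ := le_min_iff.mp hγ
  have hγL2 : γ * L ^ 2 ≤ μ := by rwa [le_div_iff₀ (by positivity)] at hγμL
  have hγμ : γ * μ ≤ 1 := calc
    γ * μ ≤ γ * L := by gcongr
    _ ≤ 1 := by rwa [le_div_iff₀ hL] at hγL
  have hstep : ∀ t, ‖θ (t + 1) - θstar (t + 1)‖ ^ 2 ≤
      (1 - γ * μ / 2) * ‖θ t - θstar t‖ ^ 2
        + (2 / (γ * μ) * ‖θstar t - θstar (t + 1)‖ ^ 2 + γ ^ 2 * ‖ξ (t + 1) (θ t)‖ ^ 2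
          + (-2 * γ) * ⟪θ t - θstar (t + 1) - γ • m (t + 1) (θ t), ξ (t + 1) (θ t)⟫_ℝ) := by
    intro t
    rw [hupd t, ← add_assoc, ← add_assoc]
    exact norm_sgd_step_sub_sq_le hμ (hzero t) (hmono t _ _) (hlip t _ _) hγ0 hγL2 hγμ
  have hq : 0 ≤ 1 - γ * μ / 2 := by linarith
  intro t
  refine (le_pow_mul_add_sum_of_le_mul_add (u := fun t => ‖θ t - θstar t‖ ^ 2) hq hstep
    t).trans_eq ?_
  simp only [mul_add, sum_add_distrib, mul_sum, mul_left_comm _ (2 / (γ * μ)),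
    mul_left_comm _ (γ ^ 2), add_assoc]
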